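/- (Diţă's construction.) Let A be a complex Hadamard matrix of order K, let B₁, …, B_K be complex Hadamard matrices of order M, and let E₁ = I, E₂, …, E_K be diagonal unitary matrices of order M. Then the KM×KM block matrix H whose (j,k)-th M×M block equals A_{jk} · E_k · B_k (for j,k ∈ {1,…,K}) is a complex Hadamard matrix of order KM. -/

import Mathlib

/-- A complex Hadamard matrix: all entries of modulus one, and `H * Hᴴ = N • 1`
where `N` is the cardinality of the index type. -/
def IsComplexHadamard {n : Type*} [Fintype n] [DecidableEq n] (H : Matrix n n ℂ) : Prop :=
  (∀ i j, ‖H i j‖ = 1) ∧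
    H * H.conjTranspose = (Fintype.card n : ℂ) • (1 : Matrix n n ℂ)

/-- A diagonal unitary matrix. -/
def IsDiagUnitary {n : Type*} [Fintype n] [DecidableEq n] (D : Matrix n n ℂ) : Prop :=
  ∃ d : n → ℂ, (∀ i, ‖d i‖ = 1) ∧ D = Matrix.diagonal d

lemma diag_unitary_mul_conjTranspose {n : Type*} [Fintype n] [DecidableEq n]
    {D : Matrix n n ℂ} (hD : IsDiagUnitary D) : D * D.conjTranspose = 1 := by
  obtain ⟨d, hd, rfl⟩ := hD
  rw [Matrix.diagonal_conjTranspose, Matrix.diagonal_mul_diagonal]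
  have h : ∀ i, d i * star (d i) = 1 := by
    intro i
    simp only [RCLike.star_def, Complex.mul_conj]
    norm_cast
    rw [Complex.normSq_eq_norm_sq, hd, one_pow]
  have h2 : (fun i => d i * (star d) i) = fun _ => (1 : ℂ) := by
    funext i; rw [Pi.star_apply]; exact h i
  rw [h2]
  exact Matrix.diagonal_one

lemma mul_hadamard_conjTranspose {n : Type*} [Fintype n] [DecidableEq n]
    {D H : Matrix n n ℂ} (hD : IsDiagUnitary D) (hH : IsComplexHadamard H) :
    (D * H) * (D * H).conjTranspose = (Fintype.card n : ℂ) • (1 : Matrix n n ℂ) := by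
  rw [Matrix.conjTranspose_mul, show D * H * (H.conjTranspose * D.conjTranspose)
      = D * (H * H.conjTranspose) * D.conjTranspose by noncomm_ring,
    hH.2, Matrix.mul_smul, Matrix.smul_mul, Matrix.mul_one,
    diag_unitary_mul_conjTranspose hD]

/-- Diţă's construction: if `A` is a complex Hadamard matrix of order
`K`, the `B k` are complex Hadamard matrices of order `M`, and the `E k` are diagonal
unitary matrices with `E 0 = I`, then the `KM × KM` block matrix whose `(j,k)`-th
`M × M` block is `A_jk · E_k · B_k` is a complex Hadamard matrix of order `KM`. -/
theorem dita_construction (K M : ℕ) (hK : 0 < K)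
    (A : Matrix (Fin K) (Fin K) ℂ)
    (B : Fin K → Matrix (Fin M) (Fin M) ℂ)
    (E : Fin K → Matrix (Fin M) (Fin M) ℂ)
    (hA : IsComplexHadamard A)
    (hB : ∀ k, IsComplexHadamard (B k))
    (hE1 : E ⟨0, hK⟩ = 1)
    (hE : ∀ k, IsDiagUnitary (E k)) :
    IsComplexHadamard (Matrix.of fun p q : Fin K × Fin M =>
      A p.1 q.1 * (E q.1 * B q.1) p.2 q.2) ∧
    Fintype.card (Fin K × Fin M) = K * M := by
  refine ⟨⟨?_, ?_⟩, by simp⟩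
  · rintro ⟨j, i⟩ ⟨k, m⟩
    obtain ⟨d, hd, hDk⟩ := hE k
    simp only [Matrix.of_apply, map_mul, norm_mul, hDk, Matrix.diagonal_mul]
    rw [hA.1, (hB k).1, hd, mul_one, mul_one]
  · ext ⟨j, i⟩ ⟨j', i'⟩
    have hEB : ∀ k, ((E k * B k) * (E k * B k).conjTranspose)
        = (M : ℂ) • (1 : Matrix (Fin M) (Fin M) ℂ) := fun k => by
      simpa using mul_hadamard_conjTranspose (hE k) (hB k)
    have hinner : ∀ (k : Fin K), (∑ m, (E k * B k) i m *
        (starRingEnd ℂ) ((E k * B k) i' m)) = ((M : ℂ) • (1 : Matrix (Fin M) (Fin M) ℂ)) i i' := by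
      intro k
      rw [← hEB k, Matrix.mul_apply]
      simp [Matrix.conjTranspose_apply]
    have houter : (∑ k, A j k * (starRingEnd ℂ) (A j' k))
        = ((K : ℂ) • (1 : Matrix (Fin K) (Fin K) ℂ)) j j' := by
      rw [show ((K : ℂ) • (1 : Matrix (Fin K) (Fin K) ℂ)) = A * A.conjTranspose by
          rw [hA.2]; simp, Matrix.mul_apply]
      simp [Matrix.conjTranspose_apply]
    simp only [Matrix.mul_apply, Matrix.conjTranspose_apply, Matrix.of_apply,
      Fintype.sum_prod_type]
    calc (∑ k, ∑ m, A j k * (E k * B k) i m *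
            (starRingEnd ℂ) (A j' k * (E k * B k) i' m))
        = ∑ k, (A j k * (starRingEnd ℂ) (A j' k)) *
            (∑ m, (E k * B k) i m * (starRingEnd ℂ) ((E k * B k) i' m)) := by
          refine Finset.sum_congr rfl fun k _ => ?_
          rw [Finset.mul_sum]
          exact Finset.sum_congr rfl fun m _ => by ring_nf; rw [map_mul]; ring
      _ = (∑ k, A j k * (starRingEnd ℂ) (A j' k)) *
            (((M : ℂ) • (1 : Matrix (Fin M) (Fin M) ℂ)) i i') := by
          rw [Finset.sum_mul]
          exact Finset.sum_congr rfl fun k _ => by rw [hinner k]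
      _ = (Fintype.card (Fin K × Fin M) : ℂ) •
            (1 : Matrix (Fin K × Fin M) (Fin K × Fin M) ℂ) (j, i) (j', i') := by
          rw [houter]
          simp only [Matrix.smul_apply, Matrix.one_apply, Prod.ext_iff, Fintype.card_prod,
            Prod.mk.injEq, smul_eq_mul, Nat.cast_mul]
          split_ifs <;> simp_all <;> ring
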